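/- arXiv:2510.24515 — 6 statements merged into one kernel-verified Lean document; each statement's English description precedes it below -/
import Mathlib

section
/- In the one-shot rank-based prize-collecting game with n agents and V nodes (n ≤ V) and nonnegative prizes p : Fin V → ℝ, if r : Fin V ≃ Fin V is a descending ordering of the prizes (p(r k) is antitone in k), then the assortative joint strategy σ defined by σ i = r i (agent i takes the node carrying the i-th largest prize) is a pure Nash equilibrium. -/
/-- Payoff of agent `i` in the one-shot rank-based prize-collecting game:
`p (σ i)` if no higher-ranked (smaller-index) agent chooses the same node, else `0`. -/
noncomputable def payoff {n V : ℕ} (p : Fin V → ℝ) (σ : Fin n → Fin V) (i : Fin n) : ℝ :=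
  if ∃ j : Fin n, j < i ∧ σ j = σ i then 0 else p (σ i)

/-- A joint strategy is a pure Nash equilibrium if no agent can gain by
unilaterally deviating to another node. -/
def IsPNE {n V : ℕ} (p : Fin V → ℝ) (σ : Fin n → Fin V) : Prop :=
  ∀ (i : Fin n) (v : Fin V), payoff p σ i ≥ payoff p (Function.update σ i v) i

/-- with nonnegative prizes and a descending ordering `r` of the prizes,
the assortative strategy `σ i = r i` is a pure Nash equilibrium. -/
theorem assortative_isPNE {n V : ℕ} (hn : n ≤ V) (p : Fin V → ℝ)
    (hp : ∀ v, 0 ≤ p v) (r : Fin V ≃ Fin V)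
    (hr : Antitone fun k : Fin V => p (r k)) :
    IsPNE p (fun i : Fin n => r (Fin.castLE hn i)) := by
  intro i v
  unfold payoff
  have hno : ¬ ∃ j : Fin n, j < i ∧
      r (Fin.castLE hn j) = r (Fin.castLE hn i) := by
    rintro ⟨j, hji, hj⟩
    have := r.injective hj
    have : j = i := Fin.ext (Fin.val_eq_val (Fin.castLE hn j) (Fin.castLE hn i) |>.mpr this)
    exact absurd this (ne_of_lt hji)
  rw [if_neg hno]
  by_cases hcase : ∃ j : Fin n, j < i ∧
      Function.update (fun i : Fin n => r (Fin.castLE hn i)) i v j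
      = Function.update (fun i : Fin n => r (Fin.castLE hn i)) i v i
  · rw [if_pos hcase]
    exact hp _
  · rw [if_neg hcase]
    simp only [Function.update_self]
    -- deviation node v = r k; show p v ≤ p (r (castLE i))
    set k := r.symm v with hk
    have hv : v = r k := by simp [hk]
    rw [hv]
    by_cases hlt : k < Fin.castLE hn i
    · -- then agent k (as an agent) would also pick v, contradicting hcase
      exfalso
      apply hcase
      refine ⟨⟨k.val, lt_of_lt_of_le hlt i.2.le⟩, ?_, ?_⟩
      · exact hlt
      · have hne : (⟨k.val, lt_of_lt_of_le hlt i.2.le⟩ : Fin n) ≠ i := by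
          intro h
          apply absurd (Fin.val_eq_val _ _ |>.mpr h)
          exact ne_of_lt hlt
        rw [Function.update_of_ne hne, Function.update_self, hv]
        congr 1
    · exact hr (not_lt.mp hlt)
end

section
/- In the one-shot rank-based prize-collecting game with n agents and V nodes (n ≤ V), if the prizes p : Fin V → ℝ are strictly positive and pairwise distinct (p is injective), then the pure Nash equilibrium is unique: every PNE σ satisfies σ i = r i for all i, where r is the (unique) descending ordering of the prizes. -/
/-- with strictly positive, pairwise distinct prizes, the PNE is unique:
every PNE agrees with the assortative strategy given by the descending ordering `r`. -/
theorem pne_unique {n V : ℕ} (hn : n ≤ V) (p : Fin V → ℝ)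
    (hpos : ∀ v, 0 < p v) (hinj : Function.Injective p)
    (r : Fin V ≃ Fin V) (hr : Antitone fun k : Fin V => p (r k))
    (σ : Fin n → Fin V) (hσ : IsPNE p σ) :
    ∀ i : Fin n, σ i = r (Fin.castLE hn i) := by
  have hrsa : StrictAnti fun k : Fin V => p (r k) := by
    intro a b hab
    rcases lt_or_eq_of_le (hr hab.le) with h | h
    · exact h
    · exact absurd (r.injective (hinj h)) hab.ne'
  suffices H : ∀ m : ℕ, ∀ i : Fin n, i.val < m → σ i = r (Fin.castLE hn i) by
    exact fun i => H (i.val + 1) i (Nat.lt_succ_self _)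
  intro m
  induction m with
  | zero => exact fun i him => absurd him (by omega)
  | succ m IHm =>
    intro i him
    have IH : ∀ j : Fin n, j < i → σ j = r (Fin.castLE hn j) :=
      fun j hj => IHm j (by omega)
    -- find an unchosen node
    obtain ⟨v, hv⟩ : ∃ v : Fin V, ∀ j, j < i → σ j ≠ v := by
      have hcard : ((Finset.Iio i).image σ).card < Fintype.card (Fin V) := by
        calc ((Finset.Iio i).image σ).card ≤ (Finset.Iio i).card :=
              Finset.card_image_le
          _ = i.val := by simp
          _ < Fintype.card (Fin V) := by simp; omega
      obtain ⟨v, hv⟩ := Finset.card_pos.mp (by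
        rw [Finset.card_compl]; omega : 0 < ((Finset.Iio i).image σ)ᶜ.card)
      refine ⟨v, fun j hj hje => ?_⟩
      simp only [Finset.mem_compl, Finset.mem_image] at hv
      exact hv ⟨j, by simpa using hj, hje⟩
    -- deviation to v gives payoff p v
    have hdev : payoff p (Function.update σ i v) i = p v := by
      unfold payoff
      rw [if_neg]
      · simp
      · rintro ⟨j, hj, hje⟩
        rw [Function.update_of_ne hj.ne, Function.update_self] at hje
        exact hv j hj hje
    have h1 : payoff p σ i ≥ p v := hdev ▸ hσ i v
    -- no conflict for i
    have hnc : ¬ ∃ j : Fin n, j < i ∧ σ j = σ i := by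
      intro hc
      have : payoff p σ i = 0 := by unfold payoff; rw [if_pos hc]
      linarith [hpos v]
    have hpay : payoff p σ i = p (σ i) := by unfold payoff; rw [if_neg hnc]
    -- deviation to w := r (castLE i)
    set w := r (Fin.castLE hn i) with hw
    have hdev2 : payoff p (Function.update σ i w) i = p w := by
      unfold payoff
      rw [if_neg]
      · simp
      · rintro ⟨j, hj, hje⟩
        rw [Function.update_of_ne hj.ne, Function.update_self] at hje
        rw [IH j hj] at hje
        have hcc := congrArg Fin.val (r.injective hje)
        simp only [Fin.coe_castLE] at hcc
        have hj' : j.val < i.val := hj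
        omega
    have h2 : p (σ i) ≥ p w := by
      have := hσ i w
      rw [hdev2, hpay] at this
      exact this
    -- conclude
    set k := r.symm (σ i) with hk
    have hσik : σ i = r k := by simp [hk]
    have hge : (Fin.castLE hn i : Fin V) ≤ k := by
      by_contra hlt
      push_neg at hlt
      have hlt' : k.val < (Fin.castLE hn i).val := hlt
      simp only [Fin.coe_castLE] at hlt'
      have hkn : k.val < n := lt_trans hlt' i.isLt
      have hj : (⟨k.val, hkn⟩ : Fin n) < i := hlt'
      exact hnc ⟨⟨k.val, hkn⟩, hj, by
        rw [IH _ hj, hσik]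
        exact congrArg r (Fin.ext rfl)⟩
    rcases lt_or_eq_of_le hge with h | h
    · exact absurd h2 (by rw [hσik]; exact not_le.mpr (hrsa h))
    · rw [hσik, ← h]
end

section
/- In the one-shot rank-based prize-collecting game with n agents and V nodes (n ≤ V) and strictly positive, pairwise distinct prizes, every pure Nash equilibrium σ satisfies p (σ i) > p (σ j) whenever i < j: senior agents collect strictly larger prizes than junior agents. -/
/-- In a PNE no agent is blocked. -/
lemma pne_unblocked {n V : ℕ} (hn : n ≤ V) (p : Fin V → ℝ)
    (hpos : ∀ v, 0 < p v)
    (σ : Fin n → Fin V) (hσ : IsPNE p σ) (i : Fin n) :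
    ¬ ∃ j : Fin n, j < i ∧ σ j = σ i := by
  intro hblock
  -- find a free node v not chosen by any agent k < i
  have hcard : ((Finset.univ.filter (fun k : Fin n => k < i)).image σ).card
      < (Finset.univ : Finset (Fin V)).card := by
    calc ((Finset.univ.filter (fun k : Fin n => k < i)).image σ).card
        ≤ (Finset.univ.filter (fun k : Fin n => k < i)).card :=
          Finset.card_image_le
      _ ≤ i.val := by
          have : (Finset.univ.filter (fun k : Fin n => k < i)) ⊆
              Finset.image (fun m : Fin i.val => (⟨m.val, m.isLt.trans i.isLt⟩ : Fin n))
              Finset.univ := by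
            intro k hk
            simp only [Finset.mem_filter, Finset.mem_univ, true_and] at hk
            simp only [Finset.mem_image, Finset.mem_univ, true_and]
            exact ⟨⟨k.val, hk⟩, by ext; rfl⟩
          calc (Finset.univ.filter (fun k : Fin n => k < i)).card
              ≤ _ := Finset.card_le_card this
            _ ≤ (Finset.univ : Finset (Fin i.val)).card := Finset.card_image_le
            _ = i.val := by simp
      _ < V := lt_of_lt_of_le i.isLt hn
      _ = (Finset.univ : Finset (Fin V)).card := by simp
  have hne : ((Finset.univ.filter (fun k : Fin n => k < i)).image σ) ≠ Finset.univ :=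
    (Finset.card_lt_iff_ne_univ _).1 (by simpa using hcard)
  obtain ⟨v, hv⟩ : ∃ v, v ∉ (Finset.univ.filter (fun k : Fin n => k < i)).image σ := by
    by_contra h
    push_neg at h
    exact hne (Finset.eq_univ_iff_forall.2 h)
  have hvfree : ∀ k : Fin n, k < i → σ k ≠ v := by
    intro k hk hkv
    exact hv (Finset.mem_image.2 ⟨k, by simp [hk], hkv⟩)
  have h1 : payoff p σ i = 0 := by simp [payoff, hblock]
  have h2 : payoff p (Function.update σ i v) i = p v := by
    have hcond : ¬ ∃ j : Fin n, j < i ∧ Function.update σ i v j = v := by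
      rintro ⟨j, hj, hjv⟩
      rw [Function.update_of_ne (ne_of_lt hj)] at hjv
      exact hvfree j hj hjv
    simp [payoff, hcond]
  have := hσ i v
  rw [h1, h2] at this
  exact absurd this (not_le.2 (hpos v))

/-- with strictly positive, pairwise distinct prizes, in every PNE
senior agents collect strictly larger prizes than junior agents. -/
theorem pne_senior_larger {n V : ℕ} (hn : n ≤ V) (p : Fin V → ℝ)
    (hpos : ∀ v, 0 < p v) (hinj : Function.Injective p)
    (σ : Fin n → Fin V) (hσ : IsPNE p σ) :
    ∀ i j : Fin n, i < j → p (σ i) > p (σ j) := by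
  intro i j hij
  have hub := pne_unblocked hn p hpos σ hσ
  have h1 : payoff p σ i = p (σ i) := by simp [payoff, hub i]
  have h2 : payoff p (Function.update σ i (σ j)) i = p (σ j) := by
    have hcond : ¬ ∃ k : Fin n, k < i ∧ Function.update σ i (σ j) k = σ j := by
      rintro ⟨k, hk, hkv⟩
      rw [Function.update_of_ne (ne_of_lt hk)] at hkv
      exact hub j ⟨k, hk.trans hij, hkv⟩
    simp [payoff, hcond]
  have hge := hσ i (σ j)
  rw [h1, h2] at hge
  have hne : σ i ≠ σ j := by
    intro h
    exact hub j ⟨i, hij, h⟩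
  exact lt_of_le_of_ne hge (fun h => hne (hinj h.symm))
end

section
/- In the one-shot rank-based prize-collecting game with n ≤ V and nonnegative prizes p, for every joint strategy σ the total team reward ∑_{i} u i σ is at most the sum of the n largest prizes ∑_{k < n} p (r k), where r is a descending ordering of the prizes; moreover, the assortative strategy σ i = r i attains this bound with equality. Hence the rank-based pure Nash equilibrium achieves the same total reward as the optimal (team-orienteering) assignment. -/
/-- with nonnegative prizes, the total team reward of any joint strategy
is at most the sum of the `n` largest prizes, and the assortative strategy
`σ i = r i` attains this bound with equality. -/
theorem total_reward_le_and_assortative_attains {n V : ℕ} (hn : n ≤ V)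
    (p : Fin V → ℝ) (hp : ∀ v, 0 ≤ p v)
    (r : Fin V ≃ Fin V) (hr : Antitone fun k : Fin V => p (r k)) :
    (∀ σ : Fin n → Fin V,
        ∑ i : Fin n, payoff p σ i ≤ ∑ k : Fin n, p (r (Fin.castLE hn k))) ∧
      ∑ i : Fin n, payoff p (fun i : Fin n => r (Fin.castLE hn i)) i =
        ∑ k : Fin n, p (r (Fin.castLE hn k)) := by
  classical
  set A : Finset (Fin V) := Finset.univ.image (fun k : Fin n => r (Fin.castLE hn k)) with hA
  have hinj : Function.Injective (fun k : Fin n => r (Fin.castLE hn k)) := by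
    intro a b h
    exact Fin.castLE_injective hn (r.injective h)
  have hAcard : A.card = n := by
    rw [hA, Finset.card_image_of_injective _ hinj, Finset.card_univ, Fintype.card_fin]
  have hAsum : ∑ v ∈ A, p v = ∑ k : Fin n, p (r (Fin.castLE hn k)) := by
    rw [hA, Finset.sum_image (fun a _ b _ h => hinj h)]
  have key : ∀ v w : Fin V, v ∉ A → w ∈ A → p v ≤ p w := by
    intro v w hv hw
    have hvn : n ≤ (r.symm v : ℕ) := by
      by_contra h
      push_neg at h
      apply hv
      rw [hA]
      refine Finset.mem_image.2 ⟨⟨(r.symm v : ℕ), h⟩, Finset.mem_univ _, ?_⟩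
      have : Fin.castLE hn ⟨(r.symm v : ℕ), h⟩ = r.symm v := rfl
      rw [this, Equiv.apply_symm_apply]
    rw [hA] at hw
    obtain ⟨k, -, hk⟩ := Finset.mem_image.1 hw
    have hwn : (r.symm w : ℕ) < n := by
      rw [← hk, Equiv.symm_apply_apply]
      exact k.isLt
    have hle : r.symm w ≤ r.symm v := le_of_lt (by
      have : (r.symm w : ℕ) < (r.symm v : ℕ) := lt_of_lt_of_le hwn hvn
      exact this)
    have := hr hle
    simpa using this
  have main : ∀ T : Finset (Fin V), T.card ≤ n → ∑ v ∈ T, p v ≤ ∑ v ∈ A, p v := by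
    intro T hT
    have hcards : (T \ A).card ≤ (A \ T).card := by
      have h1 := Finset.card_sdiff_add_card_inter T A
      have h2 := Finset.card_sdiff_add_card_inter A T
      rw [Finset.inter_comm] at h2
      omega
    have hstep : ∑ v ∈ T \ A, p v ≤ ∑ v ∈ A \ T, p v := by
      obtain ⟨S, hS, hScard⟩ := Finset.exists_subset_card_eq hcards
      rcases Nat.eq_zero_or_pos (T \ A).card with h0 | h0
      · rw [Finset.card_eq_zero.1 h0, Finset.sum_empty]
        exact Finset.sum_nonneg fun v _ => hp v
      · have hSne : S.Nonempty := Finset.card_pos.1 (hScard ▸ h0)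
        set m := S.inf' hSne p with hm
        obtain ⟨w₀, hw₀, hw₀m⟩ := S.exists_mem_eq_inf' hSne p
        have hub : ∀ v ∈ T \ A, p v ≤ m := by
          intro v hv
          rw [hm, hw₀m]
          exact key v w₀ (Finset.mem_sdiff.1 hv).2 (Finset.mem_sdiff.1 (hS hw₀)).1
        calc ∑ v ∈ T \ A, p v ≤ ∑ _v ∈ T \ A, m := Finset.sum_le_sum hub
          _ = (T \ A).card • m := by rw [Finset.sum_const]
          _ = S.card • m := by rw [hScard]
          _ = ∑ _v ∈ S, m := by rw [Finset.sum_const]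
          _ ≤ ∑ v ∈ S, p v := Finset.sum_le_sum fun v hv => Finset.inf'_le p hv
          _ ≤ ∑ v ∈ A \ T, p v := Finset.sum_le_sum_of_subset_of_nonneg hS
              fun v _ _ => hp v
    calc ∑ v ∈ T, p v = ∑ v ∈ T ∩ A, p v + ∑ v ∈ T \ A, p v := by
          rw [Finset.sum_inter_add_sum_sdiff]
      _ ≤ ∑ v ∈ T ∩ A, p v + ∑ v ∈ A \ T, p v := by linarith
      _ = ∑ v ∈ A ∩ T, p v + ∑ v ∈ A \ T, p v := by rw [Finset.inter_comm]
      _ = ∑ v ∈ A, p v := Finset.sum_inter_add_sum_sdiff A T p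
  constructor
  · intro σ
    set W : Finset (Fin n) :=
      Finset.univ.filter (fun i => ¬∃ j : Fin n, j < i ∧ σ j = σ i) with hW
    have hsum : ∑ i : Fin n, payoff p σ i = ∑ i ∈ W, p (σ i) := by
      rw [hW]
      rw [Finset.sum_filter]
      apply Finset.sum_congr rfl
      intro i _
      unfold payoff
      by_cases h : ∃ j : Fin n, j < i ∧ σ j = σ i <;> simp [h]
    have hWinj : Set.InjOn σ W := by
      intro i hi j hj hij
      by_contra hne
      rcases lt_or_gt_of_ne hne with h | h
      · exact (Finset.mem_filter.1 hj).2 ⟨i, h, hij⟩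
      · exact (Finset.mem_filter.1 hi).2 ⟨j, h, hij.symm⟩
    have himg : ∑ i ∈ W, p (σ i) = ∑ v ∈ W.image σ, p v :=
      (Finset.sum_image (fun a ha b hb h => hWinj ha hb h)).symm
    have hcard : (W.image σ).card ≤ n := by
      calc (W.image σ).card ≤ W.card := Finset.card_image_le
        _ ≤ Finset.univ.card := Finset.card_le_card (Finset.filter_subset _ _)
        _ = n := by rw [Finset.card_univ, Fintype.card_fin]
    rw [hsum, himg, ← hAsum]
    exact main _ hcard
  · apply Finset.sum_congr rfl
    intro i _
    unfold payoff
    rw [if_neg]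
    rintro ⟨j, hj, hje⟩
    exact absurd (hinj hje) (ne_of_lt hj)
end

section
/- In the one-shot rank-based prize-collecting game with nonnegative prizes and descending ordering r, consider the assortative joint strategy σ with σ i = r i. If agent i unilaterally deviates to a node r k with k < i, its payoff is 0 (the node is claimed by a senior agent); and for any unilateral deviation of agent i to an arbitrary node v, its resulting payoff is at most p (r i). -/
/-- under the assortative strategy `σ i = r i`, deviating to a node
`r k` with `k < i` yields payoff `0` (it is claimed by a senior agent), and any
unilateral deviation of agent `i` yields payoff at most `p (r i)`. -/
theorem assortative_deviation_payoffs {n V : ℕ} (hn : n ≤ V) (p : Fin V → ℝ)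
    (hp : ∀ v, 0 ≤ p v) (r : Fin V ≃ Fin V)
    (hr : Antitone fun k : Fin V => p (r k)) :
    (∀ (i : Fin n) (k : Fin V), (k : ℕ) < (i : ℕ) →
        payoff p (Function.update (fun j : Fin n => r (Fin.castLE hn j)) i (r k)) i = 0) ∧
      ∀ (i : Fin n) (v : Fin V),
        payoff p (Function.update (fun j : Fin n => r (Fin.castLE hn j)) i v) i ≤
          p (r (Fin.castLE hn i)) := by
  constructor
  · intro i k hk
    unfold payoff
    rw [if_pos]
    refine ⟨⟨k, hk.trans i.isLt⟩, Fin.lt_def.mpr hk, ?_⟩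
    have hne : (⟨k, hk.trans i.isLt⟩ : Fin n) ≠ i := Fin.ne_of_lt (Fin.lt_def.mpr hk)
    rw [Function.update_of_ne hne, Function.update_self]
    congr 1
  · intro i v
    unfold payoff
    split
    · exact hp _
    · next h =>
      rw [Function.update_self]
      push_neg at h
      set k := r.symm v with hkdef
      have hv : v = r k := (r.apply_symm_apply v).symm
      have hik : (i : ℕ) ≤ (k : ℕ) := by
        by_contra hlt
        push_neg at hlt
        have hj : (⟨k, hlt.trans i.isLt⟩ : Fin n) < i := Fin.lt_def.mpr hlt
        apply h _ hj
        rw [Function.update_of_ne (Fin.ne_of_lt hj), Function.update_self]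
        rw [hv]
        congr 1
      rw [hv]
      exact hr (Fin.le_def.mpr hik)
end

section
/- In the one-shot rank-based prize-collecting game with n ≤ V and strictly positive, pairwise distinct prizes p, in every pure Nash equilibrium σ the set of chosen nodes is exactly the set of nodes carrying the n largest prizes: Finset.image σ Finset.univ = Finset.image (fun k : Fin n => r k) Finset.univ, where r is the descending ordering of the prizes, and each agent i receives payoff u i σ = p (r i), the i-th largest prize. -/
/-- with strictly positive, pairwise distinct prizes, in every PNE the
set of chosen nodes is exactly the set of nodes carrying the `n` largest prizes, and
each agent `i` receives the `i`-th largest prize. -/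
theorem pne_image_and_payoffs {n V : ℕ} (hn : n ≤ V) (p : Fin V → ℝ)
    (hpos : ∀ v, 0 < p v) (hinj : Function.Injective p)
    (r : Fin V ≃ Fin V) (hr : Antitone fun k : Fin V => p (r k))
    (σ : Fin n → Fin V) (hσ : IsPNE p σ) :
    Finset.image σ Finset.univ =
        Finset.image (fun k : Fin n => r (Fin.castLE hn k)) Finset.univ ∧
      ∀ i : Fin n, payoff p σ i = p (r (Fin.castLE hn i)) := by
  have keyAux : ∀ m : ℕ, ∀ i : Fin n, (i : ℕ) < m → σ i = r (Fin.castLE hn i) := by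
    intro m
    induction m with
    | zero => intro i h; omega
    | succ m IH =>
      intro i him
      have ih : ∀ j : Fin n, j < i → σ j = r (Fin.castLE hn j) := by
        intro j hji
        exact IH j (by have := Fin.lt_iff_val_lt_val.mp hji; omega)
      set v : Fin V := r (Fin.castLE hn i) with hv
      -- deviation payoff
      have hdev : payoff p (Function.update σ i v) i = p v := by
        unfold payoff
        rw [if_neg]
        · simp [Function.update_self]
        · rintro ⟨j, hji, hj⟩
          rw [Function.update_of_ne (ne_of_lt hji), Function.update_self, ih j hji] at hj
          have : (Fin.castLE hn j) = (Fin.castLE hn i) := r.injective hj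
          exact absurd (Fin.castLE_injective hn this ▸ hji) (lt_irrefl i)
      have hge : payoff p σ i ≥ p v := hdev ▸ hσ i v
      have hpv : 0 < p v := hpos v
      have hnoconf : ¬ ∃ j : Fin n, j < i ∧ σ j = σ i := by
        intro hc
        have : payoff p σ i = 0 := by unfold payoff; rw [if_pos hc]
        linarith
      have hpay : payoff p σ i = p (σ i) := by unfold payoff; rw [if_neg hnoconf]
      have hge' : p (σ i) ≥ p v := hpay ▸ hge
      set k : Fin V := r.symm (σ i) with hk
      have hrk : r k = σ i := r.apply_symm_apply (σ i)
      have hkle : k ≤ Fin.castLE hn i := by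
        by_contra h
        push_neg at h
        have h1 : p (r k) ≤ p (r (Fin.castLE hn i)) := hr h.le
        have h2 : p (r k) = p (r (Fin.castLE hn i)) := le_antisymm h1 (by rw [hrk]; exact hge')
        have := r.injective (hinj h2)
        exact absurd this (ne_of_gt h)
      have hkne : ∀ j : Fin n, j < i → k ≠ Fin.castLE hn j := by
        intro j hji hkj
        have : σ j = σ i := by rw [ih j hji, ← hkj, hrk]
        exact hnoconf ⟨j, hji, this⟩
      have hkval : (k : ℕ) = (i : ℕ) := by
        rcases lt_or_eq_of_le hkle with h | h
        · exfalso
          have hkn : (k : ℕ) < n := lt_of_lt_of_le (Fin.lt_iff_val_lt_val.mp h) i.isLt.le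
          have hji : (⟨(k : ℕ), hkn⟩ : Fin n) < i := h
          exact hkne _ hji (by ext; simp)
        · exact congrArg Fin.val h
      have : k = Fin.castLE hn i := by ext; simpa using hkval
      rw [← hrk, this]
  have key : ∀ i : Fin n, σ i = r (Fin.castLE hn i) := fun i => keyAux n i i.isLt
  have hfun : σ = fun j : Fin n => r (Fin.castLE hn j) := funext key
  constructor
  · rw [hfun]
  · intro i
    have hnoconf : ¬ ∃ j : Fin n, j < i ∧ σ j = σ i := by
      rintro ⟨j, hji, hj⟩
      rw [key j, key i] at hj
      exact absurd (Fin.castLE_injective hn (r.injective hj) ▸ hji) (lt_irrefl i)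
    unfold payoff
    rw [if_neg hnoconf, key i]
end
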